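/- arXiv:1306.0729 — 4 statements merged into one kernel-verified Lean document; each statement's English description precedes it below -/
import Mathlib

section
/- A nonnegative n×n matrix A (n ≥ 2) is primitive (some power of A is entrywise positive) if and only if A^(n²-2n+2) is entrywise positive. -/
/-!
Wielandt's bound, via the digraph `i → j` iff `0 < A i j`, in which `0 < (A ^ m) i j` means
there is a walk of length `m` from `i` to `j`. If there were no cycle shorter than `n`, cutting
cycles off closed walks would make every closed walk length a multiple of `n`, contradicting the
positive diagonals of `A ^ k` and `A ^ (k + 1)`; so a shortest cycle has length `s ≤ n - 1`.
Its `s` vertices are distinct, so any `i` reaches the cycle within `n - s` steps and, going on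
around it, reaches a cycle vertex `y` in exactly `n - s` steps. In the digraph of `A ^ s` the
vertex `y` carries a loop, so every `j` is reachable from it in exactly `n - 1` steps. Hence
`A ^ (n - s + s * (n - 1))` is positive, and `n - s + s * (n - 1) ≤ n ^ 2 - 2 * n + 2`.
-/

open Finset

theorem Finset.exists_lt_lt_map_eq_of_card_lt {ι : Type*} {v : ℕ → ι} {S : Finset ι} {L : ℕ}
    (hv : ∀ t < L, v t ∈ S) (hS : #S < L) : ∃ a b, a < b ∧ b < L ∧ v a = v b := by
  obtain ⟨a, ha, b, hb, hne, heq⟩ := exists_ne_map_eq_of_card_lt_of_maps_to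
    (by simpa using hS) (fun t ht ↦ hv t (mem_range.1 ht))
  rw [mem_range] at ha hb
  rcases hne.lt_or_gt with h | h
  · exact ⟨a, b, h, hb, heq⟩
  · exact ⟨b, a, h, ha, heq.symm⟩

theorem Nat.sub_add_mul_pred_le {n s : ℕ} (hs : s < n) :
    n - s + s * (n - 1) ≤ n ^ 2 - 2 * n + 2 := by
  rcases Nat.lt_or_ge n 2 with hn | hn
  · interval_cases n <;> omega
  obtain ⟨m, rfl⟩ : ∃ m, n = m + 2 := ⟨n - 2, by omega⟩
  have hsq : 2 * (m + 2) ≤ (m + 2) ^ 2 := by nlinarith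
  zify [hs.le, hsq]
  push_cast
  nlinarith

namespace Matrix

section Walk

variable {ι R : Type*} [Zero R] [LT R] {A : Matrix ι ι R}

-- Only `v 0, …, v m` matter: they form a walk in the digraph of the positive entries of `A`.
def IsWalk (A : Matrix ι ι R) (v : ℕ → ι) (m : ℕ) : Prop :=
  ∀ t < m, 0 < A (v t) (v (t + 1))

theorem IsWalk.mod {u : ℕ → ι} {s : ℕ} (hs : 0 < s) (hu : IsWalk A u s) (hus : u s = u 0)
    (m : ℕ) : IsWalk A (fun t ↦ u (t % s)) m := by
  intro t _
  have ht := Nat.mod_lt t hs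
  simp only [← Nat.mod_add_mod t s 1]
  rcases (Nat.add_one_le_of_lt ht).eq_or_lt with hlast | hnext
  · rw [hlast, Nat.mod_self, ← hus]
    simpa only [hlast] using hu _ ht
  · rw [Nat.mod_eq_of_lt hnext]
    exact hu _ ht

end Walk

section Semiring

variable {ι R : Type*} [Fintype ι] [DecidableEq ι] [Semiring R] [LinearOrder R]
  [IsStrictOrderedRing R] {A : Matrix ι ι R}

theorem pow_add_apply_pos_iff (hA : ∀ i j, 0 ≤ A i j) {a b : ℕ} {i j : ι} :
    0 < (A ^ (a + b)) i j ↔ ∃ l, 0 < (A ^ a) i l ∧ 0 < (A ^ b) l j := by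
  have hterm (l : ι) : 0 < (A ^ a) i l * (A ^ b) l j ↔ 0 < (A ^ a) i l ∧ 0 < (A ^ b) l j := by
    rcases (pow_apply_nonneg hA a i l).eq_or_lt with h | h
    · simp [← h]
    · exact (mul_pos_iff_of_pos_left h).trans (and_iff_right h).symm
  rw [pow_add, mul_apply, Finset.sum_pos_iff_of_nonneg
    fun l _ ↦ mul_nonneg (pow_apply_nonneg hA a i l) (pow_apply_nonneg hA b l j)]
  simp only [mem_univ, true_and, hterm]

theorem pow_add_apply_pos (hA : ∀ i j, 0 ≤ A i j) {a b : ℕ} {i l j : ι}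
    (h₁ : 0 < (A ^ a) i l) (h₂ : 0 < (A ^ b) l j) : 0 < (A ^ (a + b)) i j :=
  (pow_add_apply_pos_iff hA).2 ⟨l, h₁, h₂⟩

theorem pow_apply_self_pos (hA : ∀ i j, 0 ≤ A i j) {i : ι} (h : 0 < A i i) (m : ℕ) :
    0 < (A ^ m) i i := by
  induction m with
  | zero => simp
  | succ m ih => exact pow_add_apply_pos hA ih (by rwa [pow_one])

theorem pow_succ_apply_pos (hA : ∀ i j, 0 ≤ A i j) {m : ℕ} (hm : 0 < m)
    (h : ∀ i j, 0 < (A ^ m) i j) (i j : ι) : 0 < (A ^ (m + 1)) i j := by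
  obtain ⟨l, hil, -⟩ := (pow_add_apply_pos_iff hA (a := 1) (b := m - 1)).1
    (by rw [Nat.add_sub_cancel' hm]; exact h i i)
  rw [add_comm]
  exact pow_add_apply_pos hA hil (h l j)

theorem pow_apply_pos_of_le (hA : ∀ i j, 0 ≤ A i j) {k m : ℕ} (hk : 0 < k) (hkm : k ≤ m)
    (h : ∀ i j, 0 < (A ^ k) i j) (i j : ι) : 0 < (A ^ m) i j := by
  induction m, hkm using Nat.le_induction generalizing i j with
  | base => exact h i j
  | succ m hkm ih => exact pow_succ_apply_pos hA (hk.trans_le hkm) ih i j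

theorem IsWalk.pow_sub_apply_pos (hA : ∀ i j, 0 ≤ A i j) {v : ℕ → ι} {m a b : ℕ}
    (hv : IsWalk A v m) (hab : a ≤ b) (hbm : b ≤ m) : 0 < (A ^ (b - a)) (v a) (v b) := by
  induction b, hab using Nat.le_induction with
  | base => simp
  | succ b hab ih =>
    rw [Nat.sub_add_comm hab]
    exact pow_add_apply_pos hA (ih (by omega)) (by rw [pow_one]; exact hv b hbm)

theorem exists_isWalk_of_pow_apply_pos (hA : ∀ i j, 0 ≤ A i j) {m : ℕ} {i j : ι}
    (h : 0 < (A ^ m) i j) : ∃ v : ℕ → ι, v 0 = i ∧ v m = j ∧ IsWalk A v m := by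
  induction m generalizing j with
  | zero =>
    obtain rfl : i = j := by by_contra hij; simp [one_apply_ne hij] at h
    exact ⟨fun _ ↦ i, rfl, rfl, fun t ht ↦ absurd ht t.not_lt_zero⟩
  | succ m ih =>
    obtain ⟨l, hil, hlj⟩ := (pow_add_apply_pos_iff hA).1 h
    obtain ⟨v, hv0, rfl, hv⟩ := ih hil
    refine ⟨Function.update v (m + 1) j, by simp [hv0], by simp, fun t ht ↦ ?_⟩
    rcases Nat.lt_succ_iff_lt_or_eq.1 ht with ht | rfl
    · simpa [Function.update_of_ne (by omega : t ≠ m + 1),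
        Function.update_of_ne (by omega : t + 1 ≠ m + 1)] using hv t ht
    · simpa [Function.update_of_ne (by omega : t ≠ t + 1)] using hlj

theorem IsWalk.pow_apply_pos_of_map_eq (hA : ∀ i j, 0 ≤ A i j) {v : ℕ → ι} {m a b : ℕ}
    (hv : IsWalk A v m) (hab : a < b) (hbm : b ≤ m) (heq : v a = v b) :
    0 < (A ^ (m - (b - a))) (v 0) (v m) := by
  have hhead := hv.pow_sub_apply_pos hA (Nat.zero_le a) (by omega)
  have htail := hv.pow_sub_apply_pos hA hbm le_rfl
  rw [← heq] at htail
  rw [show m - (b - a) = a - 0 + (m - b) by omega]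
  exact pow_add_apply_pos hA hhead htail

theorem exists_pow_apply_pos_le_card_compl (hA : ∀ i j, 0 ≤ A i j) (T : Finset ι) {m : ℕ}
    {i j : ι} (hj : j ∈ T) (h : 0 < (A ^ m) i j) :
    ∃ d ≤ #Tᶜ, ∃ j' ∈ T, 0 < (A ^ d) i j' := by
  induction m using Nat.strong_induction_on generalizing j with
  | _ m ih =>
    by_cases hm : m ≤ #Tᶜ
    · exact ⟨m, hm, j, hj, h⟩
    obtain ⟨v, rfl, rfl, hv⟩ := exists_isWalk_of_pow_apply_pos hA h
    by_cases hvisit : ∃ t < m, v t ∈ T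
    · obtain ⟨t, htm, ht⟩ := hvisit
      exact ih t htm ht (by simpa using hv.pow_sub_apply_pos hA (Nat.zero_le t) htm.le)
    push Not at hvisit
    obtain ⟨a, b, hab, hbm, heq⟩ := exists_lt_lt_map_eq_of_card_lt
      (fun t ht ↦ mem_compl.2 (hvisit t ht)) (not_le.1 hm)
    exact ih _ (by omega) hj (hv.pow_apply_pos_of_map_eq hA hab hbm.le heq)

theorem card_dvd_of_pow_apply_self_pos (hA : ∀ i j, 0 ≤ A i j)
    (hcyc : ∀ c, 0 < c → c < Fintype.card ι → ∀ y, ¬ 0 < (A ^ c) y y) {m : ℕ} {x : ι}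
    (h : 0 < (A ^ m) x x) : Fintype.card ι ∣ m := by
  induction m using Nat.strong_induction_on with
  | _ m ih =>
    rcases Nat.eq_zero_or_pos m with rfl | hm0
    · exact dvd_zero _
    by_cases hm : m < Fintype.card ι
    · exact absurd h (hcyc m hm0 hm x)
    obtain ⟨v, hv0, hvm, hv⟩ := exists_isWalk_of_pow_apply_pos hA h
    obtain ⟨a, b, hab, hbn, heq⟩ := exists_lt_lt_map_eq_of_card_lt (S := univ)
      (L := Fintype.card ι + 1) (fun t _ ↦ mem_univ (v t)) (by simp)
    have hcycle := hv.pow_sub_apply_pos hA hab.le (by omega)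
    rw [← heq] at hcycle
    have hlen : b - a = Fintype.card ι := by
      by_contra hne
      exact hcyc (b - a) (by omega) (by omega) (v a) hcycle
    have hshort := hv.pow_apply_pos_of_map_eq hA hab (by omega) heq
    rw [hv0, hvm, hlen] at hshort
    rw [← Nat.sub_add_cancel (not_lt.1 hm)]
    exact dvd_add (ih _ (by omega) hshort) dvd_rfl

theorem pow_card_sub_one_apply_pos (hA : ∀ i j, 0 ≤ A i j) {y j : ι} (hy : 0 < A y y)
    {m : ℕ} (h : 0 < (A ^ m) y j) : 0 < (A ^ (Fintype.card ι - 1)) y j := by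
  obtain ⟨d, hd, j', hj', hpath⟩ :=
    exists_pow_apply_pos_le_card_compl hA {j} (mem_singleton_self j) h
  obtain rfl := mem_singleton.1 hj'
  rw [card_compl, card_singleton] at hd
  rw [← Nat.sub_add_cancel hd]
  exact pow_add_apply_pos hA (pow_apply_self_pos hA hy _) hpath

theorem exists_pow_card_sub_apply_pos_of_shortest_cycle (hA : ∀ i j, 0 ≤ A i j) {s : ℕ}
    (hs : 0 < s) {w : ι} (hw : 0 < (A ^ s) w w)
    (hmin : ∀ c, 0 < c → c < s → ∀ y, ¬ 0 < (A ^ c) y y) {i : ι} {k : ℕ}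
    (hiw : 0 < (A ^ k) i w) : ∃ y, 0 < (A ^ (Fintype.card ι - s)) i y ∧ 0 < (A ^ s) y y := by
  obtain ⟨u, hu0, hus, hu⟩ := exists_isWalk_of_pow_apply_pos hA hw
  set p : ℕ → ι := fun t ↦ u (t % s)
  have hp := hu.mod hs (hus.trans hu0.symm)
  have hloop (q : ℕ) : 0 < (A ^ s) (p q) (p q) := by
    simpa [p] using (hp (q + s)).pow_sub_apply_pos hA (Nat.le_add_right q s) le_rfl
  set C := (range s).image p
  have hne {a b : ℕ} (hab : a < b) (hbs : b < s) : p a ≠ p b := by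
    intro heq
    have hcyc := hu.pow_sub_apply_pos hA hab.le hbs.le
    have hpa : p a = u a := congrArg u (Nat.mod_eq_of_lt (hab.trans hbs))
    have hpb : p b = u b := congrArg u (Nat.mod_eq_of_lt hbs)
    rw [← hpa, ← hpb, ← heq] at hcyc
    exact hmin (b - a) (by omega) (by omega) (p a) hcyc
  have hC : #C = s := by
    rw [card_image_of_injOn, card_range]
    intro a ha b hb hab
    simp only [coe_range, Set.mem_Iio] at ha hb
    by_contra h
    rcases Nat.lt_or_gt_of_ne h with h | h
    · exact hne h hb hab
    · exact hne h ha hab.symm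
  obtain ⟨d, hd, _, hj', hid⟩ := exists_pow_apply_pos_le_card_compl hA C
    (mem_image.2 ⟨0, mem_range.2 hs, by simp [p, hu0]⟩) hiw
  obtain ⟨q, -, rfl⟩ := mem_image.1 hj'
  rw [card_compl, hC] at hd
  refine ⟨p (q + (Fintype.card ι - s - d)), ?_, hloop _⟩
  have halong := (hp (q + (Fintype.card ι - s - d))).pow_sub_apply_pos hA
    (Nat.le_add_right q _) le_rfl
  rw [Nat.add_sub_cancel_left] at halong
  simpa only [Nat.add_sub_cancel' hd] using pow_add_apply_pos hA hid halong

theorem exists_pow_apply_self_pos_lt_card (hA : ∀ i j, 0 ≤ A i j) {k : ℕ} (hk : 0 < k)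
    (hpos : ∀ i j, 0 < (A ^ k) i j) (hι : 2 ≤ Fintype.card ι) :
    ∃ c, 0 < c ∧ c < Fintype.card ι ∧ ∃ y, 0 < (A ^ c) y y := by
  obtain ⟨x⟩ : Nonempty ι := Fintype.card_pos_iff.1 (by omega)
  by_contra! hlong
  have hdvd {m : ℕ} (hm : 0 < (A ^ m) x x) : Fintype.card ι ∣ m :=
    card_dvd_of_pow_apply_self_pos hA (fun c hc hcn y ↦ not_lt.2 (hlong c hc hcn y)) hm
  have hone : Fintype.card ι ∣ 1 := (Nat.dvd_add_right (hdvd (hpos x x))).1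
    (hdvd (pow_succ_apply_pos hA hk hpos x x))
  have := Nat.le_of_dvd one_pos hone
  omega

end Semiring

theorem IsPrimitive.wielandt {ι R : Type*} [Fintype ι] [DecidableEq ι] [Ring R]
    [LinearOrder R] [IsStrictOrderedRing R] {A : Matrix ι ι R} (hprim : A.IsPrimitive)
    (hι : 2 ≤ Fintype.card ι) (i j : ι) :
    0 < (A ^ (Fintype.card ι ^ 2 - 2 * Fintype.card ι + 2)) i j := by
  classical
  obtain ⟨hA, k, hk, hpos⟩ := hprim
  set n := Fintype.card ι
  have hcycle := exists_pow_apply_self_pos_lt_card hA hk hpos hι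
  set s := Nat.find hcycle
  obtain ⟨hs, hsn, w, hw⟩ := Nat.find_spec hcycle
  have hmin (c : ℕ) (hc : 0 < c) (hcs : c < s) (y : ι) : ¬ 0 < (A ^ c) y y :=
    fun hy ↦ Nat.find_min hcycle hcs ⟨hc, hcs.trans hsn, y, hy⟩
  have hbound (i j : ι) : 0 < (A ^ (n - s + s * (n - 1))) i j := by
    obtain ⟨y, hiy, hy⟩ :=
      exists_pow_card_sub_apply_pos_of_shortest_cycle hA hs hw hmin (hpos i w)
    have hyj : 0 < ((A ^ s) ^ k) y j := by
      rw [← pow_mul]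
      exact pow_apply_pos_of_le hA hk (Nat.le_mul_of_pos_left k hs) hpos y j
    have hyj' := pow_card_sub_one_apply_pos (pow_apply_nonneg hA s) hy hyj
    rw [← pow_mul] at hyj'
    exact pow_add_apply_pos hA hiy hyj'
  exact pow_apply_pos_of_le hA (by omega) (Nat.sub_add_mul_pred_le hsn) hbound i j

end Matrix

theorem stmt0 (n : ℕ) (hn : 2 ≤ n) (A : Matrix (Fin n) (Fin n) ℝ)
    (hA : ∀ i j, 0 ≤ A i j) :
    (∃ k : ℕ, 0 < k ∧ ∀ i j, 0 < (A ^ k) i j) ↔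
      (∀ i j, 0 < (A ^ (n ^ 2 - 2 * n + 2)) i j) := by
  constructor
  · rintro ⟨k, hk, hpos⟩ i j
    simpa using Matrix.IsPrimitive.wielandt ⟨hA, k, hk, hpos⟩ (by simpa using hn) i j
  · exact fun h ↦ ⟨_, by omega, h⟩
end

section
/- If a finite set M of nonnegative n×n matrices is primitive, then it has a positive product of length at most 2^(n²). That is, there exist indices i₁,…,i_k with k ≤ 2^(n²) such that A_{i₁}⋯A_{i_k} is entrywise positive. -/
/-!
Removing a factor block of a product of nonnegative matrices does not change where the product
is positive, provided the two prefixes cut at have the same positivity pattern: the pattern of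
`A * B` depends only on those of `A` and `B`. There are at most `2 ^ (n ^ 2)` patterns, so by
the pigeonhole principle any positive product longer than that has two prefixes with equal
patterns, and cutting out the block between them gives a shorter positive product.
-/

theorem List.exists_length_le_card_of_append_congr {α β : Type*} [Fintype β]
    (f : List α → β) (hf : ∀ u v w, f u = f v → f (u ++ w) = f (v ++ w)) (l : List α)
    (hne : l ≠ []) : ∃ l' : List α, l' ≠ [] ∧ l'.length ≤ Fintype.card β ∧ f l' = f l := by
  induction h : l.length using Nat.strong_induction_on generalizing l with
  | _ L ih =>
    by_cases hle : l.length ≤ Fintype.card β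
    · exact ⟨l, hne, hle, rfl⟩
    have hcard : Fintype.card β < Fintype.card (Fin l.length) := by simpa using hle
    obtain ⟨a, b, hab, heq⟩ :=
      Fintype.exists_ne_map_eq_of_card_lt (fun i : Fin l.length => f (l.take (i + 1))) hcard
    wlog hlt : a < b generalizing a b
    · exact this b a hab.symm heq.symm (lt_of_le_of_ne (not_lt.mp hlt) hab.symm)
    have hb := b.isLt
    set l' := l.take (a + 1) ++ l.drop (b + 1)
    have hlen : l'.length < L := by
      simp only [l', List.length_append, List.length_take, List.length_drop]
      omega
    have hne' : l' ≠ [] := by simp [l', hne]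
    have hval : f l' = f l := by
      rw [← List.take_append_drop (b + 1) l]
      exact hf _ _ _ heq
    obtain ⟨l'', hne'', hle'', hval''⟩ := ih _ hlen l' hne' rfl
    exact ⟨l'', hne'', hle'', hval''.trans hval⟩

namespace Matrix

variable {ι R : Type*} [Fintype ι] [Semiring R] [LinearOrder R]

def posSupport (A : Matrix ι ι R) : Finset (ι × ι) :=
  {p | 0 < A p.1 p.2}

theorem mem_posSupport {A : Matrix ι ι R} {p : ι × ι} : p ∈ A.posSupport ↔ 0 < A p.1 p.2 := by
  simp [posSupport]

theorem posSupport_eq_univ_iff {A : Matrix ι ι R} :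
    A.posSupport = Finset.univ ↔ ∀ i j, 0 < A i j := by
  simp [Finset.eq_univ_iff_forall, mem_posSupport]

variable [IsStrictOrderedRing R]

theorem mul_apply_pos_iff {A B : Matrix ι ι R} (hA : ∀ i j, 0 ≤ A i j) (hB : ∀ i j, 0 ≤ B i j)
    (i j : ι) : 0 < (A * B) i j ↔ ∃ k, 0 < A i k ∧ 0 < B k j := by
  rw [mul_apply, Finset.sum_pos_iff_of_nonneg fun k _ => mul_nonneg (hA i k) (hB k j)]
  simp only [Finset.mem_univ, true_and]
  refine exists_congr fun k => ⟨fun h => ?_, fun h => mul_pos h.1 h.2⟩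
  exact ⟨pos_of_mul_pos_left h (hB k j), pos_of_mul_pos_right h (hA i k)⟩

theorem posSupport_mul_eq_of_posSupport_eq {A A' B : Matrix ι ι R} (hA : ∀ i j, 0 ≤ A i j)
    (hA' : ∀ i j, 0 ≤ A' i j) (hB : ∀ i j, 0 ≤ B i j) (h : A.posSupport = A'.posSupport) :
    (A * B).posSupport = (A' * B).posSupport := by
  ext ⟨i, j⟩
  simp only [mem_posSupport, mul_apply_pos_iff hA hB, mul_apply_pos_iff hA' hB]
  exact exists_congr fun k => and_congr_left' <| by
    simpa only [mem_posSupport] using Finset.ext_iff.mp h (i, k)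

theorem list_prod_apply_nonneg [DecidableEq ι] {l : List (Matrix ι ι R)}
    (hl : ∀ A ∈ l, ∀ i j, 0 ≤ A i j) (i j : ι) : 0 ≤ l.prod i j := by
  refine List.prod_induction (fun A : Matrix ι ι R => ∀ i j, 0 ≤ A i j) ?_ ?_ hl i j
  · intro A B hA hB i j
    exact Finset.sum_nonneg fun k _ => mul_nonneg (hA i k) (hB k j)
  · intro i j
    by_cases h : i = j <;> simp [one_apply, h]

end Matrix

theorem stmt3 (n : ℕ) (M : Finset (Matrix (Fin n) (Fin n) ℝ))
    (hpos : ∀ A ∈ M, ∀ i j, 0 ≤ A i j)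
    (hprim : ∃ l : List (Matrix (Fin n) (Fin n) ℝ),
      (∀ P ∈ l, P ∈ M) ∧ l ≠ [] ∧ ∀ i j, 0 < l.prod i j) :
    ∃ l : List (Matrix (Fin n) (Fin n) ℝ),
      (∀ P ∈ l, P ∈ M) ∧ l ≠ [] ∧ l.length ≤ 2 ^ (n ^ 2) ∧ ∀ i j, 0 < l.prod i j := by
  obtain ⟨l, hlM, hne, hprod⟩ := hprim
  lift l to List M using hlM
  have hnonneg (u : List M) : ∀ i j, 0 ≤ (u.map Subtype.val).prod i j :=
    Matrix.list_prod_apply_nonneg fun A hA => by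
      obtain ⟨B, -, rfl⟩ := List.mem_map.mp hA
      exact hpos B B.2
  obtain ⟨l', hne', hlen, hsupp⟩ := List.exists_length_le_card_of_append_congr
    (fun u : List M => (u.map Subtype.val).prod.posSupport)
    (fun u v w h => by
      simp only [List.map_append, List.prod_append]
      exact Matrix.posSupport_mul_eq_of_posSupport_eq (hnonneg u) (hnonneg v) (hnonneg w) h)
    l (List.map_eq_nil_iff.not.mp hne)
  refine ⟨l'.map Subtype.val, fun P hP => ?_, List.map_eq_nil_iff.not.mpr hne', ?_, ?_⟩
  · obtain ⟨B, -, rfl⟩ := List.mem_map.mp hP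
    exact B.2
  · simpa [sq] using hlen
  · exact Matrix.posSupport_eq_univ_iff.mp (hsupp.trans (Matrix.posSupport_eq_univ_iff.mpr hprod))
end

section
/- Suppose every synchronizing automaton on n states admits a synchronizing word of length at most f(n). Then every primitive set M of nonnegative n×n matrices with no zero rows or columns admits a positive product of length at most 2f(n) + n − 1. -/
/-!
The maps `σ` with `A x (σ x) > 0` for all `x`, for some `A ∈ M`, are the letters of an automaton.
Reading a positive product of `M` from left to right, each factor can select in every row a
positive entry leading to a state from which a fixed state `c` is still reachable, so this
automaton is synchronizing. A synchronizing word of length at most `f n` is dominated entrywise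
by a product of `M` of the same length, which therefore has a positive column `c'`; applied to the
transposes, the same gives a product of length at most `f n` with a positive row `r`. Between
them goes a product of length at most `n - 1` with a positive `(c', r)` entry, a shortest path
in the support graph, and the three together form a positive product.
-/

open Matrix

theorem List.Forall₂.exists_mem_left_of_mem_right {α β : Type*} {r : α → β → Prop}
    {l₁ : List α} {l₂ : List β} (h : List.Forall₂ r l₁ l₂) {b : β} (hb : b ∈ l₂) :
    ∃ a ∈ l₁, r a b := by
  induction h with
  | nil => simp at hb
  | cons hab _ ih =>
    rcases List.mem_cons.1 hb with rfl | hb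
    · exact ⟨_, List.mem_cons_self, hab⟩
    · obtain ⟨a, ha, hr⟩ := ih hb
      exact ⟨a, List.mem_cons_of_mem _ ha, hr⟩

namespace Matrix

variable {ι R : Type*} [Semiring R] [LinearOrder R] [IsStrictOrderedRing R]

theorem pos_mul_apply_iff_of_nonneg {κ ν : Type*} [Fintype κ] {A : Matrix ι κ R} {B : Matrix κ ν R}
    (hA : ∀ i k, 0 ≤ A i k) (hB : ∀ k j, 0 ≤ B k j) {i : ι} {j : ν} :
    0 < (A * B) i j ↔ ∃ k, 0 < A i k ∧ 0 < B k j := by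
  rw [mul_apply, Finset.sum_pos_iff_of_nonneg fun k _ => mul_nonneg (hA i k) (hB k j)]
  simp only [Finset.mem_univ, true_and]
  refine exists_congr fun k => ⟨fun h => ⟨?_, ?_⟩, fun h => mul_pos h.1 h.2⟩
  · exact (hA i k).lt_of_ne fun h0 => h.ne (by rw [← h0, zero_mul])
  · exact (hB k j).lt_of_ne fun h0 => h.ne (by rw [← h0, mul_zero])

variable [Fintype ι] [DecidableEq ι]

theorem list_prod_nonneg {l : List (Matrix ι ι R)} (hl : ∀ A ∈ l, ∀ i j, 0 ≤ A i j) :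
    ∀ i j, 0 ≤ l.prod i j := by
  induction l with
  | nil => intro i j; rw [List.prod_nil, one_apply]; split_ifs <;> simp
  | cons A t ih =>
    rw [List.forall_mem_cons] at hl
    intro i j
    rw [List.prod_cons, mul_apply]
    exact Finset.sum_nonneg fun k _ => mul_nonneg (hl.1 i k) (ih hl.2 k j)

theorem pos_list_prod_append_iff {l₁ l₂ : List (Matrix ι ι R)}
    (h₁ : ∀ A ∈ l₁, ∀ i j, 0 ≤ A i j) (h₂ : ∀ A ∈ l₂, ∀ i j, 0 ≤ A i j) {i j : ι} :
    0 < (l₁ ++ l₂).prod i j ↔ ∃ k, 0 < l₁.prod i k ∧ 0 < l₂.prod k j := by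
  rw [List.prod_append, pos_mul_apply_iff_of_nonneg (list_prod_nonneg h₁) (list_prod_nonneg h₂)]

theorem pos_list_prod_of_forall₂ {l l' : List (Matrix ι ι R)}
    (hsupp : List.Forall₂ (fun S A => ∀ i j, 0 < S i j → 0 < A i j) l' l)
    (hl' : ∀ S ∈ l', ∀ i j, 0 ≤ S i j) (hl : ∀ A ∈ l, ∀ i j, 0 ≤ A i j) {i j : ι}
    (h : 0 < l'.prod i j) : 0 < l.prod i j := by
  induction hsupp generalizing i with
  | nil => exact h
  | @cons S A t' t hSA _ ih =>
    rw [List.forall_mem_cons] at hl hl'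
    rw [List.prod_cons, pos_mul_apply_iff_of_nonneg hl'.1 (list_prod_nonneg hl'.2)] at h
    obtain ⟨k, hS, ht'⟩ := h
    rw [List.prod_cons, pos_mul_apply_iff_of_nonneg hl.1 (list_prod_nonneg hl.2)]
    exact ⟨k, hSA i k hS, ih hl'.2 hl.2 ht'⟩

-- For a product of length at least `card ι`, two intermediate states coincide; cut out the loop.
theorem exists_sublist_pos_list_prod_length_lt (l : List (Matrix ι ι R))
    (hl : ∀ A ∈ l, ∀ i j, 0 ≤ A i j) {i j : ι} (h : 0 < l.prod i j) :
    ∃ l' : List (Matrix ι ι R), l'.Sublist l ∧ l'.length < Fintype.card ι ∧ 0 < l'.prod i j := by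
  induction hL : l.length using Nat.strong_induction_on generalizing l with
  | _ L ih =>
  by_cases hshort : L < Fintype.card ι
  · exact ⟨l, List.Sublist.refl l, hL ▸ hshort, h⟩
  have hsplit : ∀ k : Fin (L + 1), ∃ x, 0 < (l.take k).prod i x ∧ 0 < (l.drop k).prod x j := by
    intro k
    rw [← pos_list_prod_append_iff (fun A hA => hl A (List.mem_of_mem_take hA))
      (fun A hA => hl A (List.mem_of_mem_drop hA)), List.take_append_drop]
    exact h
  choose x hx using hsplit
  obtain ⟨a, b, hne, hab⟩ := Fintype.exists_ne_map_eq_of_card_lt x (by simp; omega)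
  wlog hlt : a < b generalizing a b
  · exact this b a hne.symm hab.symm (lt_of_le_of_ne (not_lt.1 hlt) hne.symm)
  have hsub : (l.take a ++ l.drop b).Sublist l := by
    conv_rhs => rw [← List.take_append_drop a l]
    exact (List.Sublist.refl _).append (List.drop_sublist_drop_left l (le_of_lt hlt))
  have hpos : 0 < (l.take a ++ l.drop b).prod i j :=
    (pos_list_prod_append_iff (fun A hA => hl A (List.mem_of_mem_take hA))
      (fun A hA => hl A (List.mem_of_mem_drop hA))).2 ⟨x a, (hx a).1, hab ▸ (hx b).2⟩
  have hlen : (l.take a ++ l.drop b).length < L := by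
    simp only [List.length_append, List.length_take, List.length_drop, hL]
    omega
  obtain ⟨l', hl'sub, hl'len, hl'⟩ := ih _ hlen _ (fun A hA => hl A (hsub.subset hA)) hpos rfl
  exact ⟨l', hl'sub.trans hsub, hl'len, hl'⟩

end Matrix

section Automaton

variable {ι R : Type*}

def runWord (w : List (ι → ι)) (x : ι) : ι :=
  w.foldl (fun y σ => σ y) x

@[simp]
theorem runWord_nil (x : ι) : runWord [] x = x := rfl

@[simp]
theorem runWord_cons (σ : ι → ι) (w : List (ι → ι)) (x : ι) :
    runWord (σ :: w) x = runWord w (σ x) := rfl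

variable [DecidableEq ι]

def transitionMatrix [Zero R] [One R] (σ : ι → ι) : Matrix ι ι R :=
  Matrix.of fun i j => if j = σ i then 1 else 0

section ZeroOne

variable [Zero R] [One R]

theorem transitionMatrix_apply_eq_zero_or_one (σ : ι → ι) (i j : ι) :
    transitionMatrix σ i j = (0 : R) ∨ transitionMatrix σ i j = (1 : R) := by
  simp only [transitionMatrix, of_apply]
  split_ifs <;> simp

theorem existsUnique_transitionMatrix_apply_eq_one [NeZero (1 : R)] (σ : ι → ι) (i : ι) :
    ∃! j, transitionMatrix σ i j = (1 : R) := by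
  refine ⟨σ i, by simp [transitionMatrix], fun j hj => ?_⟩
  by_contra hne
  simp [transitionMatrix, hne] at hj

theorem transitionMatrix_nonneg [Preorder R] [ZeroLEOneClass R] (σ : ι → ι) (i j : ι) :
    0 ≤ (transitionMatrix σ : Matrix ι ι R) i j := by
  rcases transitionMatrix_apply_eq_zero_or_one (R := R) σ i j with h | h <;> simp [h]

theorem pos_of_transitionMatrix_pos [Preorder R] {A : Matrix ι ι R} {σ : ι → ι}
    (hσ : ∀ x, 0 < A x (σ x)) {i j : ι} (h : 0 < (transitionMatrix σ : Matrix ι ι R) i j) :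
    0 < A i j := by
  by_cases hj : j = σ i
  · exact hj ▸ hσ i
  · simp [transitionMatrix, hj] at h

end ZeroOne

variable [Semiring R]

theorem transitionMatrix_id : transitionMatrix id = (1 : Matrix ι ι R) := by
  ext i j
  simp [transitionMatrix, one_apply, eq_comm]

variable [Fintype ι]

theorem transitionMatrix_mul (σ τ : ι → ι) :
    transitionMatrix σ * transitionMatrix τ = (transitionMatrix (τ ∘ σ) : Matrix ι ι R) := by
  ext i j
  simp only [transitionMatrix, of_apply, mul_apply, ite_mul, one_mul, zero_mul,
    Finset.sum_ite_eq', Finset.mem_univ, if_true, Function.comp_apply]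

theorem list_prod_map_transitionMatrix (w : List (ι → ι)) :
    (w.map transitionMatrix).prod = (transitionMatrix (runWord w) : Matrix ι ι R) := by
  induction w with
  | nil => exact transitionMatrix_id.symm
  | cons σ w ih =>
    rw [List.map_cons, List.prod_cons, ih, transitionMatrix_mul]
    rfl

end Automaton

section Primitive

variable {ι R : Type*} [Fintype ι] [DecidableEq ι] [Semiring R] [LinearOrder R]
  [IsStrictOrderedRing R]

theorem exists_forall₂_runWord_eq {l : List (Matrix ι ι R)}
    (hl : ∀ A ∈ l, ∀ i j, 0 ≤ A i j) (hrow : ∀ A ∈ l, ∀ i, ∃ j, 0 < A i j) (c : ι) :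
    ∃ w : List (ι → ι), List.Forall₂ (fun A σ => ∀ x, 0 < A x (σ x)) l w ∧
      ∀ x, 0 < l.prod x c → runWord w x = c := by
  induction l with
  | nil =>
    refine ⟨[], List.Forall₂.nil, fun x hx => ?_⟩
    rw [runWord_nil]
    by_contra hne
    rw [List.prod_nil, one_apply_ne hne] at hx
    exact lt_irrefl 0 hx
  | cons A t ih =>
    rw [List.forall_mem_cons] at hl hrow
    obtain ⟨w, hw, hrun⟩ := ih hl.2 hrow.2
    have hstep : ∀ x, ∃ y, 0 < A x y ∧ (0 < (A * t.prod) x c → 0 < t.prod y c) := by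
      intro x
      by_cases hx : 0 < (A * t.prod) x c
      · obtain ⟨y, hAy, hty⟩ :=
          (pos_mul_apply_iff_of_nonneg hl.1 (list_prod_nonneg hl.2)).1 hx
        exact ⟨y, hAy, fun _ => hty⟩
      · obtain ⟨y, hAy⟩ := hrow.1 x
        exact ⟨y, hAy, fun h => absurd h hx⟩
    choose σ hσA hσt using hstep
    exact ⟨σ :: w, List.Forall₂.cons hσA hw, fun x hx => hrun (σ x) (hσt x hx)⟩

/-- Every synchronizing automaton with state set `ι`, given by the 0/1 row-stochastic matrices of
its letters, has a synchronizing word of length at most `N`. -/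
def SyncBound (ι R : Type*) [Fintype ι] [DecidableEq ι] [Semiring R] (N : ℕ) : Prop :=
  ∀ M' : Finset (Matrix ι ι R),
    (∀ A ∈ M', ∀ i j, A i j = 0 ∨ A i j = 1) → (∀ A ∈ M', ∀ i, ∃! j, A i j = 1) →
    (∃ l : List (Matrix ι ι R), (∀ S ∈ l, S ∈ M') ∧ l ≠ [] ∧
      ∃ c, l.prod = transitionMatrix fun _ => c) →
    ∃ l : List (Matrix ι ι R), (∀ S ∈ l, S ∈ M') ∧ l ≠ [] ∧ l.length ≤ N ∧
      ∃ c, l.prod = transitionMatrix fun _ => c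

theorem exists_short_prod_pos_col {N : ℕ} (hN : SyncBound ι R N) {M : Finset (Matrix ι ι R)}
    (hM : ∀ A ∈ M, ∀ i j, 0 ≤ A i j) (hrow : ∀ A ∈ M, ∀ i, ∃ j, 0 < A i j)
    {P : List (Matrix ι ι R)} (hPM : ∀ A ∈ P, A ∈ M) (hPne : P ≠ []) {c : ι}
    (hP : ∀ i, 0 < P.prod i c) :
    ∃ l : List (Matrix ι ι R), (∀ A ∈ l, A ∈ M) ∧ l ≠ [] ∧ l.length ≤ N ∧
      ∃ c, ∀ i, 0 < l.prod i c := by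
  classical
  set M' : Finset (Matrix ι ι R) :=
    (Finset.univ.filter fun σ : ι → ι => ∃ A ∈ M, ∀ x, 0 < A x (σ x)).image transitionMatrix
  have hM' : ∀ S ∈ M', ∃ σ, S = transitionMatrix σ ∧ ∃ A ∈ M, ∀ x, 0 < A x (σ x) := by
    intro S hS
    obtain ⟨σ, hσ, rfl⟩ := Finset.mem_image.1 hS
    exact ⟨σ, rfl, (Finset.mem_filter.1 hσ).2⟩
  obtain ⟨w, hw, hrun⟩ := exists_forall₂_runWord_eq (fun A hA => hM A (hPM A hA))
    (fun A hA => hrow A (hPM A hA)) c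
  have hsync : ∃ l : List (Matrix ι ι R), (∀ S ∈ l, S ∈ M') ∧ l ≠ [] ∧
      ∃ c, l.prod = transitionMatrix fun _ => c := by
    refine ⟨w.map transitionMatrix, fun S hS => ?_, ?_, c, ?_⟩
    · obtain ⟨σ, hσ, rfl⟩ := List.mem_map.1 hS
      obtain ⟨A, hA, hAσ⟩ := hw.exists_mem_left_of_mem_right hσ
      exact Finset.mem_image_of_mem _ (Finset.mem_filter.2 ⟨Finset.mem_univ _, A, hPM A hA, hAσ⟩)
    · rwa [Ne, List.map_eq_nil_iff, ← List.length_eq_zero_iff, ← hw.length_eq,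
        List.length_eq_zero_iff]
    · rw [list_prod_map_transitionMatrix]
      exact congrArg transitionMatrix (funext fun x => hrun x (hP x))
  obtain ⟨l', hl'M', hl'ne, hl'len, c', hl'⟩ := hN M'
    (fun S hS => by
      obtain ⟨σ, rfl, -⟩ := hM' S hS
      exact transitionMatrix_apply_eq_zero_or_one σ)
    (fun S hS => by
      obtain ⟨σ, rfl, -⟩ := hM' S hS
      exact existsUnique_transitionMatrix_apply_eq_one σ)
    hsync
  have hdom : ∀ S ∈ M', ∃ A ∈ M, ∀ i j, 0 < S i j → 0 < A i j := by
    intro S hS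
    obtain ⟨σ, rfl, A, hA, hσ⟩ := hM' S hS
    exact ⟨A, hA, fun i j => pos_of_transitionMatrix_pos hσ⟩
  choose! g hgM hg using hdom
  have hgl'M : ∀ A ∈ l'.map g, A ∈ M := by
    simpa only [List.forall_mem_map] using fun S hS => hgM S (hl'M' S hS)
  refine ⟨l'.map g, hgl'M, by simpa using hl'ne, by simpa using hl'len, c', fun i => ?_⟩
  refine pos_list_prod_of_forall₂
    (List.forall₂_map_right_iff.2 (List.forall₂_same.2 fun S hS => hg S (hl'M' S hS)))
    (fun S hS => ?_) (fun A hA => hM A (hgl'M A hA)) ?_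
  · obtain ⟨σ, rfl, -⟩ := hM' S (hl'M' S hS)
    exact transitionMatrix_nonneg σ
  · simp [hl', transitionMatrix]

end Primitive

theorem exists_short_prod_pos_row {ι R : Type*} [Fintype ι] [DecidableEq ι] [CommSemiring R]
    [LinearOrder R] [IsStrictOrderedRing R] {N : ℕ} (hN : SyncBound ι R N)
    {M : Finset (Matrix ι ι R)} (hM : ∀ A ∈ M, ∀ i j, 0 ≤ A i j)
    (hcol : ∀ A ∈ M, ∀ j, ∃ i, 0 < A i j) {P : List (Matrix ι ι R)} (hPM : ∀ A ∈ P, A ∈ M)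
    (hPne : P ≠ []) {r : ι} (hP : ∀ j, 0 < P.prod r j) :
    ∃ l : List (Matrix ι ι R), (∀ A ∈ l, A ∈ M) ∧ l ≠ [] ∧ l.length ≤ N ∧
      ∃ r, ∀ j, 0 < l.prod r j := by
  classical
  have hT : ∀ {M : Finset (Matrix ι ι R)} {l : List (Matrix ι ι R)}, (∀ A ∈ l, A ∈ M) →
      ∀ A ∈ (l.map transpose).reverse, A ∈ M.image transpose := by
    intro M l hl A hA
    obtain ⟨B, hB, rfl⟩ := List.mem_map.1 (List.mem_reverse.1 hA)
    exact Finset.mem_image_of_mem _ (hl B hB)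
  obtain ⟨l, hlM, hlne, hllen, r', hl⟩ := exists_short_prod_pos_col hN (M := M.image transpose)
    (by simpa using fun A hA i j => hM A hA j i) (by simpa using fun A hA => hcol A hA)
    (hT hPM) (by simpa using hPne) (c := r) (fun i => by rw [← transpose_list_prod]; exact hP i)
  refine ⟨(l.map transpose).reverse, ?_, by simpa using hlne, by simpa using hllen, r',
    fun j => by rw [← transpose_list_prod]; exact hl j⟩
  simpa [Finset.image_image, (transpose_involutive ι R).comp_self] using hT hlM

theorem stmt12 (n : ℕ) (hn : 0 < n) (f : ℕ → ℕ)
    (hf : ∀ M' : Finset (Matrix (Fin n) (Fin n) ℝ),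
      (∀ A ∈ M', ∀ i j, A i j = 0 ∨ A i j = 1) →
      (∀ A ∈ M', ∀ i, ∃! j, A i j = 1) →
      (∃ l : List (Matrix (Fin n) (Fin n) ℝ), (∀ P ∈ l, P ∈ M') ∧ l ≠ [] ∧
        ∃ i : Fin n, l.prod = Matrix.of fun _ c => if c = i then (1 : ℝ) else 0) →
      ∃ l : List (Matrix (Fin n) (Fin n) ℝ), (∀ P ∈ l, P ∈ M') ∧ l ≠ [] ∧
        l.length ≤ f n ∧
        ∃ i : Fin n, l.prod = Matrix.of fun _ c => if c = i then (1 : ℝ) else 0)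
    (M : Finset (Matrix (Fin n) (Fin n) ℝ))
    (hpos : ∀ A ∈ M, ∀ i j, 0 ≤ A i j)
    (hrow : ∀ A ∈ M, ∀ i, ∃ j, 0 < A i j)
    (hcol : ∀ A ∈ M, ∀ j, ∃ i, 0 < A i j)
    (hprim : ∃ l : List (Matrix (Fin n) (Fin n) ℝ),
      (∀ P ∈ l, P ∈ M) ∧ l ≠ [] ∧ ∀ i j, 0 < l.prod i j) :
    ∃ l : List (Matrix (Fin n) (Fin n) ℝ),
      (∀ P ∈ l, P ∈ M) ∧ l ≠ [] ∧ l.length ≤ 2 * f n + n - 1 ∧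
      ∀ i j, 0 < l.prod i j := by
  have hN : SyncBound (Fin n) ℝ (f n) := hf
  have hnonneg : ∀ {l : List (Matrix (Fin n) (Fin n) ℝ)}, (∀ A ∈ l, A ∈ M) →
      ∀ A ∈ l, ∀ i j, 0 ≤ A i j := fun hl A hA => hpos A (hl A hA)
  obtain ⟨P, hPM, hPne, hP⟩ := hprim
  obtain ⟨l₁, hl₁M, hl₁ne, hl₁len, c, hc⟩ :=
    exists_short_prod_pos_col hN hpos hrow hPM hPne (c := ⟨0, hn⟩) fun i => hP i _
  obtain ⟨l₂, hl₂M, -, hl₂len, r, hr⟩ :=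
    exists_short_prod_pos_row hN hpos hcol hPM hPne (r := ⟨0, hn⟩) fun j => hP _ j
  obtain ⟨l₃, hl₃P, hl₃len, hl₃⟩ :=
    exists_sublist_pos_list_prod_length_lt P (hnonneg hPM) (hP c r)
  have hl₃M : ∀ A ∈ l₃, A ∈ M := fun A hA => hPM A (hl₃P.subset hA)
  have hlM : ∀ A ∈ l₁ ++ l₃ ++ l₂, A ∈ M := by
    simpa only [List.forall_mem_append] using ⟨⟨hl₁M, hl₃M⟩, hl₂M⟩
  refine ⟨l₁ ++ l₃ ++ l₂, hlM, by simp [hl₁ne], ?_, fun i j => ?_⟩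
  · simp only [List.length_append, Fintype.card_fin] at hl₃len ⊢
    omega
  · have hl₁₃ : 0 < (l₁ ++ l₃).prod i r :=
      (pos_list_prod_append_iff (hnonneg hl₁M) (hnonneg hl₃M)).2 ⟨c, hc i, hl₃⟩
    exact (pos_list_prod_append_iff (hnonneg (List.forall_mem_append.1 hlM).1)
      (hnonneg hl₂M)).2 ⟨r, hl₁₃, hr j⟩
end

section
/- Let M be a finite set of nonnegative n×n matrices with no zero rows or columns. If some product B₁ of matrices from M has a strictly positive column i, some product B₂ has a strictly positive row j, and some product C satisfies C_{ij} > 0, then the product B₁CB₂ is entrywise positive; hence M is primitive. -/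
namespace Matrix

variable {ι R : Type*} [Fintype ι] [Semiring R] [PartialOrder R]

section OrderedRing

variable [IsOrderedRing R]

theorem mul_entry_nonneg {A B : Matrix ι ι R} (hA : ∀ r s, 0 ≤ A r s) (hB : ∀ r s, 0 ≤ B r s)
    (r s : ι) : 0 ≤ (A * B) r s :=
  Finset.sum_nonneg fun k _ => mul_nonneg (hA r k) (hB k s)

theorem list_prod_entry_nonneg [DecidableEq ι] {l : List (Matrix ι ι R)}
    (hl : ∀ A ∈ l, ∀ r s, 0 ≤ A r s) : ∀ r s, 0 ≤ l.prod r s :=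
  List.prod_induction (fun P : Matrix ι ι R => ∀ r s, 0 ≤ P r s) (fun _ _ => mul_entry_nonneg)
    (fun r s => by rw [one_apply]; split_ifs <;> simp) hl

end OrderedRing

variable [IsStrictOrderedRing R]

theorem mul_entry_pos {A B : Matrix ι ι R} (hA : ∀ r s, 0 ≤ A r s) (hB : ∀ r s, 0 ≤ B r s)
    {r k s : ι} (hrk : 0 < A r k) (hks : 0 < B k s) : 0 < (A * B) r s :=
  Finset.sum_pos' (fun m _ => mul_nonneg (hA r m) (hB m s))
    ⟨k, Finset.mem_univ k, mul_pos hrk hks⟩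

theorem mul_mul_entry_pos_of_pos_col_of_pos_row {A B C : Matrix ι ι R}
    (hA : ∀ r s, 0 ≤ A r s) (hB : ∀ r s, 0 ≤ B r s) (hC : ∀ r s, 0 ≤ C r s) {i j : ι}
    (hcol : ∀ r, 0 < A r i) (hij : 0 < B i j) (hrow : ∀ s, 0 < C j s) (r s : ι) :
    0 < (A * B * C) r s :=
  mul_entry_pos (mul_entry_nonneg hA hB) hC (mul_entry_pos hA hB (hcol r) hij) (hrow s)

end Matrix

theorem stmt19_general (n : ℕ) (M : Set (Matrix (Fin n) (Fin n) ℝ))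
    (hpos : ∀ A ∈ M, ∀ i j, 0 ≤ A i j)
    (b₁ b₂ c : List (Matrix (Fin n) (Fin n) ℝ))
    (hb₁ : ∀ P ∈ b₁, P ∈ M) (hb₂ : ∀ P ∈ b₂, P ∈ M) (hc : ∀ P ∈ c, P ∈ M)
    (hcne : c ≠ [])
    (i j : Fin n)
    (hcoli : ∀ r, 0 < b₁.prod r i)
    (hrowj : ∀ s, 0 < b₂.prod j s)
    (hCij : 0 < c.prod i j) :
    (∀ r s, 0 < (b₁.prod * c.prod * b₂.prod) r s) ∧
    ∃ l : List (Matrix (Fin n) (Fin n) ℝ),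
      (∀ P ∈ l, P ∈ M) ∧ l ≠ [] ∧ ∀ r s, 0 < l.prod r s := by
  have nonneg {l : List (Matrix (Fin n) (Fin n) ℝ)} (hl : ∀ P ∈ l, P ∈ M) :=
    Matrix.list_prod_entry_nonneg fun P hP => hpos P (hl P hP)
  have key := Matrix.mul_mul_entry_pos_of_pos_col_of_pos_row (nonneg hb₁) (nonneg hc)
    (nonneg hb₂) hcoli hCij hrowj
  refine ⟨key, b₁ ++ c ++ b₂, ?_, by simp [hcne], by simpa only [List.prod_append] using key⟩
  simp only [List.mem_append]
  rintro P ((hP | hP) | hP)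
  exacts [hb₁ P hP, hc P hP, hb₂ P hP]

theorem stmt19 (n : ℕ) (M : Set (Matrix (Fin n) (Fin n) ℝ))
    (hpos : ∀ A ∈ M, ∀ i j, 0 ≤ A i j)
    (hrow : ∀ A ∈ M, ∀ i, ∃ j, 0 < A i j)
    (hcol : ∀ A ∈ M, ∀ j, ∃ i, 0 < A i j)
    (b₁ b₂ c : List (Matrix (Fin n) (Fin n) ℝ))
    (hb₁ : ∀ P ∈ b₁, P ∈ M) (hb₂ : ∀ P ∈ b₂, P ∈ M) (hc : ∀ P ∈ c, P ∈ M)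
    (hb₁ne : b₁ ≠ []) (hb₂ne : b₂ ≠ []) (hcne : c ≠ [])
    (i j : Fin n)
    (hcoli : ∀ r, 0 < b₁.prod r i)
    (hrowj : ∀ s, 0 < b₂.prod j s)
    (hCij : 0 < c.prod i j) :
    (∀ r s, 0 < (b₁.prod * c.prod * b₂.prod) r s) ∧
    ∃ l : List (Matrix (Fin n) (Fin n) ℝ),
      (∀ P ∈ l, P ∈ M) ∧ l ≠ [] ∧ ∀ r s, 0 < l.prod r s :=
  stmt19_general n M hpos b₁ b₂ c hb₁ hb₂ hc hcne i j hcoli hrowj hCij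
end
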